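/- If G is a nonabelian subgroup of the orientation-preserving C² diffeomorphisms of [0,1) whose centralizer in that group is nonabelian, then Fix(G) contains a nonempty open interval. -/

import Mathlib

/-- A model for an orientation-preserving C^r diffeomorphism of the half-open
interval [0,1): a permutation of ℝ that is the identity outside [0,1), restricts to a
C^r monotone bijection of [0,1) with C^r inverse. -/
def IsIcoDiff (r : ℕ∞) (g : Equiv.Perm ℝ) : Prop :=
  ContDiffOn ℝ r ⇑g (Set.Ico 0 1) ∧ ContDiffOn ℝ r ⇑g.symm (Set.Ico 0 1) ∧
  Set.BijOn ⇑g (Set.Ico 0 1) (Set.Ico 0 1) ∧ StrictMonoOn ⇑g (Set.Ico 0 1) ∧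
  ∀ x : ℝ, x ∉ Set.Ico (0:ℝ) 1 → g x = x

/-!
Suppose `Fix(G)` has empty interior. The commutator `c = ⁅h₁, h₂⁆` is not the identity, so it
moves a point `w` that `G` does not fix; let `(a, b)` be the component of `ℝ \ Fix(G)` containing
`w`. Kopell's lemma says: if `φ` is `C²` on `[0, 1)` without fixed points in `(α, q)`, every `C¹`
diffeomorphism commuting with `φ` and fixing a point of `(α, q)` is the identity there. It is used
twice.
* An element `e` of the `C²` centralizer moving `a` would force every `g ∈ G` to be the identity
  near `a`, yet points of `(a, b)` arbitrarily close to `a` are moved. So `e` fixes `a` and `b`.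
* If such an `e` fixes a point of `(a, b)`, each of its fixed points there is moved by some
  `g ∈ G`, hence lies in the interior of `Fix(e)`; by connectedness `e` fixes all of `(a, b)`.
So the `C²` centralizer acts freely by increasing homeomorphisms on `(a, b)`, and by Hölder's
theorem this action is abelian. Hence `c` fixes `w`, a contradiction.
-/

open Set Filter Topology Function
open scoped NNReal commutatorElement

section Iterate

variable {α : Type*} [ConditionallyCompleteLinearOrder α] [TopologicalSpace α] [OrderTopology α]
  {f : α → α} {x b : α}

theorem Monotone.exists_tendsto_iterate_of_le_map (hf : Monotone f) (hc : Continuous f)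
    (hx : x ≤ f x) (hb : ∀ n, f^[n] x ≤ b) :
    ∃ L, IsFixedPt f L ∧ (∀ n, f^[n] x ≤ L) ∧ L ≤ b ∧ Tendsto (fun n => f^[n] x) atTop (𝓝 L) := by
  have hbdd : BddAbove (range fun n => f^[n] x) := ⟨b, forall_mem_range.2 hb⟩
  have hL := tendsto_atTop_ciSup (hf.monotone_iterate_of_le_map hx) hbdd
  exact ⟨_, isFixedPt_of_tendsto_iterate hL hc.continuousAt, le_ciSup hbdd, ciSup_le hb, hL⟩

theorem Monotone.exists_tendsto_iterate_of_map_le (hf : Monotone f) (hc : Continuous f)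
    (hx : f x ≤ x) (hb : ∀ n, b ≤ f^[n] x) :
    ∃ L, IsFixedPt f L ∧ (∀ n, L ≤ f^[n] x) ∧ b ≤ L ∧ Tendsto (fun n => f^[n] x) atTop (𝓝 L) :=
  Monotone.exists_tendsto_iterate_of_le_map (α := αᵒᵈ) hf.dual hc hx hb

theorem Monotone.tendsto_iterate_of_le_map (hf : Monotone f) (hc : Continuous f)
    (hx : x ≤ f x) (hb : ∀ n, f^[n] x ≤ b) (hfree : ∀ y ∈ Ico x b, f y ≠ y) :
    Tendsto (fun n => f^[n] x) atTop (𝓝 b) := by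
  obtain ⟨L, hLfix, hxL, hLb, hL⟩ := hf.exists_tendsto_iterate_of_le_map hc hx hb
  obtain rfl : L = b := hLb.eq_of_not_lt fun hLb => hfree L ⟨hxL 0, hLb⟩ hLfix
  exact hL

theorem Monotone.tendsto_iterate_of_map_le (hf : Monotone f) (hc : Continuous f)
    (hx : f x ≤ x) (hb : ∀ n, b ≤ f^[n] x) (hfree : ∀ y ∈ Ioc b x, f y ≠ y) :
    Tendsto (fun n => f^[n] x) atTop (𝓝 b) :=
  Monotone.tendsto_iterate_of_le_map (α := αᵒᵈ) hf.dual hc hx hb fun y hy => hfree y ⟨hy.2, hy.1⟩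

end Iterate

theorem Monotone.Icc_subset_fixedPoints_of_expanding {h : ℝ → ℝ} (hm : Monotone h)
    (hc : Continuous h) {u v C : ℝ} (hu : IsFixedPt h u) (hv : IsFixedPt h v)
    (hexp : ∀ m, ∀ x ∈ Icc u v, ∀ y ∈ Icc u v, x ≤ y → y - x ≤ C * (h^[m] y - h^[m] x)) :
    Icc u v ⊆ fixedPoints h := by
  intro z hz
  by_contra hne
  rcases lt_or_gt_of_ne hne with hlt | hgt
  · obtain ⟨L, hLfix, hLz, huL, hL⟩ := hm.exists_tendsto_iterate_of_map_le hc hlt.le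
      fun m => (hu.iterate m).eq ▸ hm.iterate m hz.1
    have hLz' : L < z := (hLz 1).trans_lt hlt
    have hlim : Tendsto (fun m => C * (h^[m] z - h^[m] L)) atTop (𝓝 (C * (L - L))) := by
      simpa only [(hLfix.iterate _).eq] using (hL.sub_const L).const_mul C
    have := ge_of_tendsto' hlim fun m => hexp m L ⟨huL, hLz'.le.trans hz.2⟩ z hz hLz'.le
    linarith
  · obtain ⟨L, hLfix, hLz, hLv, hL⟩ := hm.exists_tendsto_iterate_of_le_map hc hgt.le
      fun m => (hv.iterate m).eq ▸ hm.iterate m hz.2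
    have hLz' : z < L := hgt.trans_le (hLz 1)
    have hlim : Tendsto (fun m => C * (h^[m] L - h^[m] z)) atTop (𝓝 (C * (L - L))) := by
      simpa only [(hLfix.iterate _).eq] using (hL.const_sub L).const_mul C
    have := ge_of_tendsto' hlim fun m => hexp m z hz L ⟨hz.1.trans hLz'.le, hLv⟩ hLz'.le
    linarith

theorem IsPreconnected.subset_of_forall_mem_nhds {X : Type*} [TopologicalSpace X] {s C : Set X}
    (hs : IsPreconnected s) (hC : IsClosed C) (hne : (s ∩ C).Nonempty)
    (hloc : ∀ x ∈ s ∩ C, C ∈ 𝓝 x) : s ⊆ C := by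
  refine (hs.subset_of_closure_inter_subset isOpen_interior ?_ ?_).trans interior_subset
  · obtain ⟨x, hx⟩ := hne
    exact ⟨x, hx.1, mem_interior_iff_mem_nhds.2 (hloc x hx)⟩
  · rintro x ⟨hxC, hxs⟩
    have hxC : x ∈ C := hC.closure_subset_iff.2 interior_subset hxC
    exact mem_interior_iff_mem_nhds.2 (hloc x ⟨hxs, hxC⟩)

theorem IsClosed.exists_Ioo_of_notMem {F : Set ℝ} (hF : IsClosed F) {s t w : ℝ}
    (hs : s ∈ F) (ht : t ∈ F) (hsw : s ≤ w) (hwt : w ≤ t) (hw : w ∉ F) :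
    ∃ a b, a ∈ F ∧ b ∈ F ∧ w ∈ Ioo a b ∧ ∀ x ∈ Ioo a b, x ∉ F := by
  have hbddA : BddAbove (F ∩ Iic w) := ⟨w, fun _ hx => hx.2⟩
  have hbddB : BddBelow (F ∩ Ici w) := ⟨w, fun _ hx => hx.2⟩
  have ha := (hF.inter isClosed_Iic).csSup_mem ⟨s, hs, hsw⟩ hbddA
  have hb := (hF.inter isClosed_Ici).csInf_mem ⟨t, ht, hwt⟩ hbddB
  refine ⟨_, _, ha.1, hb.1, ⟨ha.2.lt_of_ne (ne_of_mem_of_not_mem ha.1 hw),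
    hb.2.lt_of_ne' (ne_of_mem_of_not_mem hb.1 hw)⟩, fun x hx hxF => ?_⟩
  rcases le_total x w with hxw | hwx
  · exact hx.1.not_ge (le_csSup hbddA ⟨hxF, hxw⟩)
  · exact hx.2.not_ge (csInf_le hbddB ⟨hxF, hwx⟩)

theorem exists_isFixedPt_mem_uIcc {f : ℝ → ℝ} {x y : ℝ} (hf : ContinuousOn f (uIcc x y))
    (hx : x ≤ f x) (hy : f y ≤ y) : ∃ z ∈ uIcc x y, IsFixedPt f z := by
  have h0 : (0 : ℝ) ∈ uIcc (f x - x) (f y - y) := mem_uIcc.2 (Or.inr ⟨by linarith, by linarith⟩)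
  obtain ⟨z, hz, hz0⟩ := intermediate_value_uIcc (hf.sub continuousOn_id) h0
  exact ⟨z, hz, sub_eq_zero.1 hz0⟩

theorem Commute.function_commute {α : Type*} {σ τ : Equiv.Perm α} (h : Commute σ τ) :
    Function.Commute σ τ :=
  fun x => DFunLike.congr_fun h.eq x

theorem Subgroup.commutatorElement_mem {G : Type*} [Group G] (H : Subgroup G) {u v : G}
    (hu : u ∈ H) (hv : v ∈ H) : ⁅u, v⁆ ∈ H := by
  rw [commutatorElement_def]
  exact H.mul_mem (H.mul_mem (H.mul_mem hu hv) (H.inv_mem hu)) (H.inv_mem hv)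

section Deriv

variable {𝕜 : Type*} [NontriviallyNormedField 𝕜]

theorem hasDerivWithinAt_iterate_prod {f f' : 𝕜 → 𝕜} {s : Set 𝕜} (hs : MapsTo f s s)
    (hf : ∀ x ∈ s, HasDerivWithinAt f (f' x) s x) (n : ℕ) {x : 𝕜} (hx : x ∈ s) :
    HasDerivWithinAt f^[n] (∏ k ∈ Finset.range n, f' (f^[k] x)) s x := by
  induction n generalizing x with
  | zero => simpa using hasDerivWithinAt_id x s
  | succ n ih =>
    rw [iterate_succ, Finset.prod_range_succ']
    simpa only [iterate_succ_apply, iterate_zero_apply] using (ih (hs hx)).comp x (hf x hx) hs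

theorem HasDerivWithinAt.eq_one_of_frequently_isFixedPt {h : 𝕜 → 𝕜} {h' a : 𝕜} {s : Set 𝕜}
    (hd : HasDerivWithinAt h h' s a) (ha : IsFixedPt h a)
    (hfix : ∃ᶠ x in 𝓝[s \ {a}] a, IsFixedPt h x) : h' = 1 := by
  refine isClosed_singleton.mem_of_frequently_of_tendsto ?_
    (hasDerivWithinAt_iff_tendsto_slope.1 hd)
  refine hfix.mp (eventually_mem_nhdsWithin.mono fun x hx hfx => ?_)
  rw [mem_singleton_iff, slope_def_field, hfx.eq, ha.eq, div_self (sub_ne_zero.2 hx.2)]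

end Deriv

theorem prod_iterate_le_exp_mul_prod {f f' : ℝ → ℝ} {K : ℝ≥0} {α p x y : ℝ} (hf : Monotone f)
    (hfα : f α = α) (hαp : α ≤ p) (hfp : f p ≤ p) (hpos : ∀ z ∈ Icc α p, 0 < f' z)
    (hlip : LipschitzOnWith K (fun z => Real.log (f' z)) (Icc α p))
    (hx : x ∈ Icc (f p) p) (hy : y ∈ Icc (f p) p) (n : ℕ) :
    ∏ k ∈ Finset.range n, f' (f^[k] x) ≤
      Real.exp (K * (p - α)) * ∏ k ∈ Finset.range n, f' (f^[k] y) := by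
  -- the `k`-th factors are evaluated in `[f^[k+1] p, f^[k] p]`; these have total length `≤ p - α`
  have hstep : ∀ k, ∀ z ∈ Icc (f p) p, f^[k] z ∈ Icc (f^[k + 1] p) (f^[k] p) := fun k z hz =>
    ⟨iterate_succ_apply f k p ▸ hf.iterate k hz.1, hf.iterate k hz.2⟩
  have horbit : ∀ k, α ≤ f^[k] p ∧ f^[k] p ≤ p := fun k =>
    ⟨iterate_fixed hfα k ▸ hf.iterate k hαp, hf.antitone_iterate_of_map_le hfp (Nat.zero_le k)⟩
  have hmem : ∀ k, ∀ z ∈ Icc (f p) p, f^[k] z ∈ Icc α p := fun k z hz =>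
    ⟨(horbit (k + 1)).1.trans (hstep k z hz).1, (hstep k z hz).2.trans (horbit k).2⟩
  have hterm : ∀ k ∈ Finset.range n,
      f' (f^[k] x) ≤ Real.exp (K * (f^[k] p - f^[k + 1] p)) * f' (f^[k] y) := by
    intro k _
    have hdist : dist (f^[k] x) (f^[k] y) ≤ f^[k] p - f^[k + 1] p := by
      obtain ⟨hx₁, hx₂⟩ := hstep k x hx
      obtain ⟨hy₁, hy₂⟩ := hstep k y hy
      rw [Real.dist_eq, abs_sub_le_iff]; constructor <;> linarith
    have hlog := hlip.le_add_mul (hmem k x hx) (hmem k y hy)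
    calc f' (f^[k] x) = Real.exp (Real.log (f' (f^[k] x))) :=
          (Real.exp_log (hpos _ (hmem k x hx))).symm
      _ ≤ Real.exp (K * (f^[k] p - f^[k + 1] p) + Real.log (f' (f^[k] y))) := by
          gcongr; nlinarith [K.coe_nonneg]
      _ = _ := by rw [Real.exp_add, Real.exp_log (hpos _ (hmem k y hy))]
  calc ∏ k ∈ Finset.range n, f' (f^[k] x)
      ≤ ∏ k ∈ Finset.range n, Real.exp (K * (f^[k] p - f^[k + 1] p)) * f' (f^[k] y) :=
        Finset.prod_le_prod (fun k _ => (hpos _ (hmem k x hx)).le) hterm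
    _ = Real.exp (K * (p - f^[n] p)) * ∏ k ∈ Finset.range n, f' (f^[k] y) := by
        rw [Finset.prod_mul_distrib, ← Real.exp_sum, ← Finset.mul_sum,
          Finset.sum_range_sub' (fun k => f^[k] p), iterate_zero_apply]
    _ ≤ _ := by
        gcongr
        · exact Finset.prod_nonneg fun k _ => (hpos _ (hmem k y hy)).le
        · exact (horbit n).1

namespace IsIcoDiff

variable {r : ℕ∞} {f g : Equiv.Perm ℝ}

theorem apply_eq_self (h : IsIcoDiff r g) {x : ℝ} (hx : x ∉ Ico (0 : ℝ) 1) : g x = x :=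
  h.2.2.2.2 x hx

theorem mem_Ico_of_apply_ne (h : IsIcoDiff r g) {x : ℝ} (hx : g x ≠ x) : x ∈ Ico (0 : ℝ) 1 :=
  not_not.1 (mt h.apply_eq_self hx)

theorem mapsTo (h : IsIcoDiff r g) : MapsTo g (Ico 0 1) (Ico 0 1) :=
  h.2.2.1.mapsTo

theorem strictMono (h : IsIcoDiff r g) : StrictMono g := by
  intro x y hxy
  by_cases hx : x ∈ Ico (0 : ℝ) 1 <;> by_cases hy : y ∈ Ico (0 : ℝ) 1
  · exact h.2.2.2.1 hx hy hxy
  · have hy1 : 1 ≤ y := not_lt.1 fun hy1 => hy ⟨hx.1.trans hxy.le, hy1⟩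
    rw [h.apply_eq_self hy]
    linarith [(h.mapsTo hx).2]
  · have hx0 : x < 0 := not_le.1 fun hx0 => hx ⟨hx0, hxy.trans hy.2⟩
    rw [h.apply_eq_self hx]
    linarith [(h.mapsTo hy).1]
  · rwa [h.apply_eq_self hx, h.apply_eq_self hy]

theorem continuous (h : IsIcoDiff r g) : Continuous g :=
  h.strictMono.monotone.continuous_of_surjective g.surjective

theorem of_le {s : ℕ∞} (h : IsIcoDiff r g) (hsr : s ≤ r) : IsIcoDiff s g :=
  ⟨h.1.of_le (by exact_mod_cast hsr), h.2.1.of_le (by exact_mod_cast hsr), h.2.2⟩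

theorem one : IsIcoDiff r 1 :=
  ⟨contDiffOn_id, contDiffOn_id, bijOn_id _, strictMonoOn_id, fun _ _ => rfl⟩

theorem mul (hf : IsIcoDiff r f) (hg : IsIcoDiff r g) : IsIcoDiff r (f * g) :=
  ⟨hf.1.comp hg.1 hg.mapsTo, hg.2.1.comp hf.2.1 hf.2.2.1.perm_inv.mapsTo,
    hf.2.2.1.comp hg.2.2.1, (hf.strictMono.comp hg.strictMono).strictMonoOn _,
    fun x hx => by rw [Equiv.Perm.mul_apply, hg.apply_eq_self hx, hf.apply_eq_self hx]⟩

theorem inv (h : IsIcoDiff r g) : IsIcoDiff r g⁻¹ :=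
  ⟨h.2.1, h.1, h.2.2.1.perm_inv,
    fun x _ y _ hxy => h.strictMono.lt_iff_lt.1 (by simpa using hxy),
    fun x hx => by rw [Equiv.Perm.inv_eq_iff_eq, h.apply_eq_self hx]⟩

end IsIcoDiff

def icoDiffGroup (r : ℕ∞) : Subgroup (Equiv.Perm ℝ) where
  carrier := {g | IsIcoDiff r g}
  mul_mem' := IsIcoDiff.mul
  one_mem' := IsIcoDiff.one
  inv_mem' := IsIcoDiff.inv

namespace IsIcoDiff

variable {r : ℕ∞} {g : Equiv.Perm ℝ}

theorem pow (h : IsIcoDiff r g) (n : ℕ) : IsIcoDiff r (g ^ n) :=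
  (icoDiffGroup r).pow_mem h n

theorem hasDerivWithinAt (h : IsIcoDiff 1 g) {x : ℝ} (hx : x ∈ Ico (0 : ℝ) 1) :
    HasDerivWithinAt g (derivWithin g (Ico 0 1) x) (Ico 0 1) x :=
  (h.1.differentiableOn one_ne_zero x hx).hasDerivWithinAt

theorem derivWithin_pos (h : IsIcoDiff 1 g) {x : ℝ} (hx : x ∈ Ico (0 : ℝ) 1) :
    0 < derivWithin g (Ico 0 1) x := by
  have hcomp := (h.inv.hasDerivWithinAt (h.mapsTo hx)).comp x (h.hasDerivWithinAt hx) h.mapsTo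
  have hid : HasDerivWithinAt id (derivWithin ⇑g⁻¹ (Ico 0 1) (g x) * derivWithin g (Ico 0 1) x)
      (Ico 0 1) x :=
    hcomp.congr_of_mem (fun y _ => (g.symm_apply_apply y).symm) hx
  have hone := (uniqueDiffOn_Ico 0 1 x hx).eq_deriv _ hid (hasDerivWithinAt_id x _)
  refine (h.strictMono.monotone.monotoneOn _).derivWithin_nonneg.lt_of_ne fun h0 => ?_
  rw [← h0, mul_zero] at hone
  exact zero_ne_one hone

end IsIcoDiff

section Kopell

variable {r : ℕ∞} {φ g h : Equiv.Perm ℝ} {α p q C : ℝ}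

theorem IsIcoDiff.exists_derivWithin_iterate_le_mul (hφ : IsIcoDiff 2 φ) (hα : 0 ≤ α)
    (hφα : φ α = α) (hαp : α ≤ p) (hφp : φ p ≤ p) (hp : p < 1) :
    ∃ C, ∀ n, ∀ x ∈ Icc (φ p) p, ∀ y ∈ Icc (φ p) p,
      derivWithin φ^[n] (Ico 0 1) x ≤ C * derivWithin φ^[n] (Ico 0 1) y := by
  have hφ₁ : IsIcoDiff 1 φ := hφ.of_le one_le_two
  have hsub : Icc α p ⊆ Ico 0 1 := Icc_subset_Ico hα hp
  have hsub' : Icc (φ p) p ⊆ Icc α p := Icc_subset_Icc_left (hφα ▸ hφ.strictMono.monotone hαp)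
  have hpos : ∀ z ∈ Icc α p, 0 < derivWithin φ (Ico 0 1) z :=
    fun z hz => hφ₁.derivWithin_pos (hsub hz)
  have hlog : ContDiffOn ℝ 1 (fun z => Real.log (derivWithin φ (Ico 0 1) z)) (Icc α p) :=
    ((hφ.1.derivWithin (uniqueDiffOn_Ico 0 1) le_rfl).mono hsub).log fun z hz => (hpos z hz).ne'
  obtain ⟨K, hK⟩ := hlog.exists_lipschitzOnWith one_ne_zero (convex_Icc α p) isCompact_Icc
  have hderiv : ∀ n, ∀ x ∈ Icc (φ p) p, derivWithin φ^[n] (Ico 0 1) x =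
      ∏ k ∈ Finset.range n, derivWithin φ (Ico 0 1) (φ^[k] x) := fun n x hx =>
    (hasDerivWithinAt_iterate_prod hφ.mapsTo (fun y hy => hφ₁.hasDerivWithinAt hy) n
      (hsub (hsub' hx))).derivWithin (uniqueDiffOn_Ico 0 1 x (hsub (hsub' hx)))
  refine ⟨Real.exp (K * (p - α)), fun n x hx y hy => ?_⟩
  rw [hderiv n x hx, hderiv n y hy]
  exact prod_iterate_le_exp_mul_prod hφ.strictMono.monotone hφα hαp hφp hpos hK hx hy n

theorem IsIcoDiff.derivWithin_eq_one_of_commute (hφ : IsIcoDiff r φ) (hh : IsIcoDiff 1 h)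
    (hcomm : Commute φ h) (hα : α ∈ Ico (0 : ℝ) 1) (hp : p ∈ Ico (0 : ℝ) 1)
    (horbit : Tendsto (fun n => φ^[n] p) atTop (𝓝[>] α)) (hhp : h p = p) :
    derivWithin h (Ico 0 1) α = 1 := by
  have hfix : ∀ n, h (φ^[n] p) = φ^[n] p := fun n => by
    rw [← (hcomm.function_commute.iterate_left n).eq, hhp]
  have hlim : Tendsto (fun n => φ^[n] p) atTop (𝓝 α) := tendsto_nhds_of_tendsto_nhdsWithin horbit
  have hhα : h α = α :=
    tendsto_nhds_unique ((hh.continuous.tendsto α).comp hlim) (by simpa [comp_def, hfix] using hlim)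
  refine (hh.hasDerivWithinAt hα).eq_one_of_frequently_isFixedPt hhα ?_
  refine (tendsto_nhdsWithin_iff.2 ⟨hlim, ?_⟩).frequently (Frequently.of_forall hfix)
  filter_upwards [(tendsto_nhdsWithin_iff.1 horbit).2] with n hn
  exact ⟨hφ.mapsTo.iterate n hp, hn.ne'⟩

theorem IsIcoDiff.derivWithin_iterate_apply_le_mul (hφ : IsIcoDiff 1 φ) (hh : IsIcoDiff 1 h)
    (hcomm : Commute φ h) {x : ℝ} (hx : x ∈ Ico (0 : ℝ) 1) (n : ℕ)
    (hC : derivWithin φ^[n] (Ico 0 1) (h x) ≤ C * derivWithin φ^[n] (Ico 0 1) x) :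
    derivWithin h (Ico 0 1) (φ^[n] x) ≤ C * derivWithin h (Ico 0 1) x := by
  have hφn : ∀ y ∈ Ico (0 : ℝ) 1,
      HasDerivWithinAt φ^[n] (derivWithin φ^[n] (Ico 0 1) y) (Ico 0 1) y := fun y hy => by
    simpa only [Equiv.Perm.coe_pow] using (hφ.pow n).hasDerivWithinAt hy
  have hhφ := (hh.hasDerivWithinAt (hφ.mapsTo.iterate n hx)).comp x (hφn x hx)
    (hφ.mapsTo.iterate n)
  have hφh := (hφn _ (hh.mapsTo hx)).comp x (hh.hasDerivWithinAt hx) hh.mapsTo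
  rw [(hcomm.function_commute.iterate_left n).comp_eq] at hφh
  have hchain := (uniqueDiffOn_Ico 0 1 x hx).eq_deriv _ hhφ hφh
  have hD : 0 < derivWithin φ^[n] (Ico 0 1) x := by
    simpa only [Equiv.Perm.coe_pow] using (hφ.pow n).derivWithin_pos hx
  refine le_of_mul_le_mul_right ?_ hD
  rw [hchain, mul_comm C, mul_assoc, mul_comm _ (derivWithin _ _ x)]
  exact mul_le_mul_of_nonneg_left hC (hh.strictMono.monotone.monotoneOn _).derivWithin_nonneg

theorem IsIcoDiff.one_le_mul_derivWithin_of_commute (hφ : IsIcoDiff 1 φ) (hh : IsIcoDiff 1 h)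
    (hcomm : Commute φ h) (hα : α ∈ Ico (0 : ℝ) 1) (hp : p ∈ Ico (0 : ℝ) 1)
    (horbit : Tendsto (fun n => φ^[n] p) atTop (𝓝[>] α)) (hhp : h p = p)
    (hC : ∀ n, ∀ x ∈ Icc (φ p) p, ∀ y ∈ Icc (φ p) p,
      derivWithin φ^[n] (Ico 0 1) x ≤ C * derivWithin φ^[n] (Ico 0 1) y) :
    ∀ x ∈ Icc (φ p) p, 1 ≤ C * derivWithin h (Ico 0 1) x := by
  intro x hx
  have hxI : x ∈ Ico (0 : ℝ) 1 := Icc_subset_Ico (hφ.mapsTo hp).1 hp.2 hx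
  have hhx : h x ∈ Icc (φ p) p := by
    have hhφp : h (φ p) = φ p := by rw [← hcomm.function_commute.eq, hhp]
    exact ⟨hhφp ▸ hh.strictMono.monotone hx.1, hhp ▸ hh.strictMono.monotone hx.2⟩
  have hlim : Tendsto (fun n => φ^[n] p) atTop (𝓝 α) := tendsto_nhds_of_tendsto_nhdsWithin horbit
  have hφx : Tendsto (fun n => φ^[n] x) atTop (𝓝[Ico 0 1] α) := by
    refine tendsto_nhdsWithin_iff.2 ⟨tendsto_of_tendsto_of_tendsto_of_le_of_le
      (hlim.comp (tendsto_add_atTop_nat 1)) hlim (fun n => ?_) (fun n => ?_),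
      Eventually.of_forall fun n => hφ.mapsTo.iterate n hxI⟩
    · simpa only [comp_apply, iterate_succ_apply] using (hφ.strictMono.monotone.iterate n) hx.1
    · exact (hφ.strictMono.monotone.iterate n) hx.2
  have hcont :=
    ((hh.1.continuousOn_derivWithin (uniqueDiffOn_Ico 0 1) le_rfl) α hα).tendsto.comp hφx
  rw [hφ.derivWithin_eq_one_of_commute hh hcomm hα hp horbit hhp] at hcont
  exact le_of_tendsto' hcont fun n =>
    hφ.derivWithin_iterate_apply_le_mul hh hcomm hxI n (hC n _ hhx x hx)

theorem IsIcoDiff.sub_le_mul_sub_of_one_le_mul_derivWithin (hh : IsIcoDiff 1 h) {u v : ℝ}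
    (hu : 0 ≤ u) (hv : v < 1) (hC : ∀ z ∈ Icc u v, 1 ≤ C * derivWithin h (Ico 0 1) z) :
    ∀ x ∈ Icc u v, ∀ y ∈ Icc u v, x ≤ y → y - x ≤ C * (h y - h x) := by
  have hderiv : ∀ z ∈ Ioo u v, HasDerivAt (fun z => C * h z) (C * derivWithin h (Ico 0 1) z) z :=
    fun z hz => ((hh.hasDerivWithinAt ⟨hu.trans hz.1.le, hz.2.trans hv⟩).hasDerivAt
      (Ico_mem_nhds (hu.trans_lt hz.1) (hz.2.trans hv))).const_mul C
  intro x hx y hy hxy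
  have := (convex_Icc u v).mul_sub_le_image_sub_of_le_deriv (f := fun z => C * h z)
    (continuous_const.mul hh.continuous).continuousOn
    (fun z hz => by
      rw [interior_Icc] at hz; exact (hderiv z hz).differentiableAt.differentiableWithinAt)
    (fun z hz => by
      rw [(hderiv z (by rwa [interior_Icc] at hz)).deriv]; exact hC z (interior_subset hz))
    x hx y hy hxy
  linarith

/- Kopell's argument on the fundamental domain `[φ p, p]`: the iterates of `φ` have bounded
distortion there, and each `g^m` commutes with them and has derivative `1` at `α`, so every `g^m`
expands `[φ p, p]` by at least `1 / C`. An orbit of `g` converging to a fixed point is then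
impossible. -/
theorem IsIcoDiff.Icc_subset_fixedPoints_of_commute (hφ : IsIcoDiff 2 φ) (hg : IsIcoDiff 1 g)
    (hcomm : Commute φ g) (hφα : φ α = α) (hαp : α < p) (hφp : φ p < p)
    (hfree : ∀ x ∈ Ioo α p, φ x ≠ x) (hgp : g p = p) :
    Icc (φ p) p ⊆ fixedPoints g := by
  have hp : p ∈ Ico (0 : ℝ) 1 := hφ.mem_Ico_of_apply_ne hφp.ne
  have hα : α ∈ Ico (0 : ℝ) 1 := by
    have hcl : closure (Ioo α p) ⊆ Icc 0 1 := by
      rw [← closure_Ico (zero_ne_one' ℝ)]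
      exact closure_mono fun x hx => hφ.mem_Ico_of_apply_ne (hfree x hx)
    have hα : α ∈ closure (Ioo α p) := by rw [closure_Ioo hαp.ne]; exact left_mem_Icc.2 hαp.le
    exact ⟨(hcl hα).1, hαp.trans hp.2⟩
  have hmono := hφ.strictMono
  have horbit : Tendsto (fun n => φ^[n] p) atTop (𝓝[>] α) := by
    refine tendsto_nhdsWithin_iff.2 ⟨hmono.monotone.tendsto_iterate_of_map_le hφ.continuous hφp.le
      (fun n => iterate_fixed hφα n ▸ hmono.monotone.iterate n hαp.le) fun y hy => ?_,
      Eventually.of_forall fun n => iterate_fixed hφα n ▸ hmono.iterate n hαp⟩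
    rcases hy.2.eq_or_lt with rfl | hyp
    exacts [hφp.ne, hfree y ⟨hy.1, hyp⟩]
  obtain ⟨C, hC⟩ := hφ.exists_derivWithin_iterate_le_mul hα.1 hφα hαp.le hφp.le hp.2
  have hgφp : g (φ p) = φ p := by rw [← hcomm.function_commute.eq, hgp]
  refine hg.strictMono.monotone.Icc_subset_fixedPoints_of_expanding (C := C) hg.continuous hgφp
    hgp fun m => ?_
  have hgm := hg.pow m
  have hgmp : (g ^ m) p = p := by rw [Equiv.Perm.coe_pow, iterate_fixed hgp]
  simpa only [Equiv.Perm.coe_pow] using hgm.sub_le_mul_sub_of_one_le_mul_derivWithin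
    (hφ.mapsTo hp).1 hp.2 <| (hφ.of_le one_le_two).one_le_mul_derivWithin_of_commute
      hgm (hcomm.pow_right m) hα hp horbit hgmp hC

theorem IsIcoDiff.fixedPoints_mem_nhds_of_commute (hφ : IsIcoDiff 2 φ) (hg : IsIcoDiff 1 g)
    (hcomm : Commute φ g) (hφα : φ α = α) (hφq : φ q = q) (hfree : ∀ x ∈ Ioo α q, φ x ≠ x)
    {x : ℝ} (hx : x ∈ Ioo α q) (hgx : g x = x) : fixedPoints g ∈ 𝓝 x := by
  wlog hφx : φ x < x generalizing φ
  · have hxφ : x < φ x := (hfree x hx).lt_or_gt.resolve_left hφx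
    refine this hφ.inv hcomm.inv_left (by rw [Equiv.Perm.inv_eq_iff_eq, hφα])
      (by rw [Equiv.Perm.inv_eq_iff_eq, hφq]) (fun y hy h => hfree y hy ?_) ?_
    · rw [Equiv.Perm.inv_eq_iff_eq] at h; exact h.symm
    · simpa using hφ.inv.strictMono hxφ
  have hmono := hφ.inv.strictMono
  have hxφ : x < φ⁻¹ x := by simpa using hmono hφx
  have hφq' : φ⁻¹ x < q := by simpa [Equiv.Perm.inv_eq_iff_eq.2 hφq.symm] using hmono hx.2
  have hgφx : g (φ⁻¹ x) = φ⁻¹ x := by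
    rw [← hcomm.inv_left.function_commute.eq, hgx]
  have hleft := hφ.Icc_subset_fixedPoints_of_commute hg hcomm hφα hx.1 hφx
    (fun y hy => hfree y ⟨hy.1, hy.2.trans hx.2⟩) hgx
  have hright := hφ.Icc_subset_fixedPoints_of_commute hg hcomm hφα (hx.1.trans hxφ)
    (by simpa using hxφ) (fun y hy => hfree y ⟨hy.1, hy.2.trans hφq'⟩) hgφx
  simp only [Equiv.Perm.coe_inv, Equiv.apply_symm_apply] at hright
  exact mem_of_superset (Icc_mem_nhds hφx hxφ)
    (Icc_union_Icc_eq_Icc hφx.le hxφ.le ▸ union_subset hleft hright)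

theorem IsIcoDiff.Ioo_subset_fixedPoints_of_commute (hφ : IsIcoDiff 2 φ) (hg : IsIcoDiff 1 g)
    (hcomm : Commute φ g) (hφα : φ α = α) (hφq : φ q = q) (hfree : ∀ x ∈ Ioo α q, φ x ≠ x)
    (hp : p ∈ Ioo α q) (hgp : g p = p) : Ioo α q ⊆ fixedPoints g :=
  isPreconnected_Ioo.subset_of_forall_mem_nhds (isClosed_fixedPoints hg.continuous) ⟨p, hp, hgp⟩
    fun _ hx => hφ.fixedPoints_mem_nhds_of_commute hg hcomm hφα hφq hfree hx.1 hx.2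

theorem IsIcoDiff.exists_mem_nhds_subset_fixedPoints (hφ : IsIcoDiff 2 φ) (hp : φ p ≠ p) :
    ∃ U ∈ 𝓝 p, ∀ g, IsIcoDiff 1 g → Commute φ g → g p = p → U ⊆ fixedPoints g := by
  have hp01 := hφ.mem_Ico_of_apply_ne hp
  obtain ⟨α, q, hα, hq, hpαq, hfree⟩ := (isClosed_fixedPoints hφ.continuous).exists_Ioo_of_notMem
    (hφ.apply_eq_self (by norm_num : (-1 : ℝ) ∉ Ico 0 1))
    (hφ.apply_eq_self (by norm_num : (1 : ℝ) ∉ Ico 0 1)) (by linarith [hp01.1]) hp01.2.le hp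
  exact ⟨Ioo α q, isOpen_Ioo.mem_nhds hpαq, fun g hg hcomm hgp =>
    hφ.Ioo_subset_fixedPoints_of_commute hg hcomm hα hq hfree hpαq hgp⟩

end Kopell

structure IsFreeMonotoneActionOn (H : Subgroup (Equiv.Perm ℝ)) (a b : ℝ) : Prop where
  strictMono : ∀ e ∈ H, StrictMono e
  continuous : ∀ e ∈ H, Continuous e
  mapsTo : ∀ e ∈ H, MapsTo e (Ioo a b) (Ioo a b)
  eqOn_of_isFixedPt : ∀ e ∈ H, ∀ x ∈ Ioo a b, e x = x → ∀ y ∈ Ioo a b, e y = y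

namespace IsFreeMonotoneActionOn

variable {H : Subgroup (Equiv.Perm ℝ)} {a b : ℝ} {c d e e₁ e₂ u v : Equiv.Perm ℝ} {x y : ℝ}

theorem apply_lt_apply_of_lt (hH : IsFreeMonotoneActionOn H a b) (he₁ : e₁ ∈ H) (he₂ : e₂ ∈ H)
    (hx : x ∈ Ioo a b) (hlt : e₁ x < e₂ x) : ∀ y ∈ Ioo a b, e₁ y < e₂ y := by
  intro y hy
  by_contra! hle
  have hd : e₁⁻¹ * e₂ ∈ H := H.mul_mem (H.inv_mem he₁) he₂
  have happly : ∀ z, e₁ ((e₁⁻¹ * e₂) z) = e₂ z := fun z => by simp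
  have hmono := hH.strictMono e₁ he₁
  have hx' : x ≤ (e₁⁻¹ * e₂) x := hmono.le_iff_le.1 (by rw [happly]; exact hlt.le)
  have hy' : (e₁⁻¹ * e₂) y ≤ y := hmono.le_iff_le.1 (by rw [happly]; exact hle)
  obtain ⟨z, hz, hfix⟩ := exists_isFixedPt_mem_uIcc (hH.continuous _ hd).continuousOn hx' hy'
  have hdx := hH.eqOn_of_isFixedPt _ hd z (ordConnected_Ioo.uIcc_subset hx hy hz) hfix x hx
  rw [← happly, hdx] at hlt
  exact hlt.false

theorem apply_le_apply_of_le (hH : IsFreeMonotoneActionOn H a b) (he₁ : e₁ ∈ H) (he₂ : e₂ ∈ H)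
    (hx : x ∈ Ioo a b) (hle : e₁ x ≤ e₂ x) : ∀ y ∈ Ioo a b, e₁ y ≤ e₂ y :=
  fun _ hy => not_lt.1 fun hlt => (hH.apply_lt_apply_of_lt he₂ he₁ hy hlt x hx).not_ge hle

theorem lt_apply_of_lt_apply (hH : IsFreeMonotoneActionOn H a b) (hd : d ∈ H)
    (hx : x ∈ Ioo a b) (hdx : x < d x) : ∀ y ∈ Ioo a b, y < d y :=
  hH.apply_lt_apply_of_lt H.one_mem hd hx hdx

theorem exists_zpow_apply_le_lt (hH : IsFreeMonotoneActionOn H a b) (hd : d ∈ H)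
    (hx : x ∈ Ioo a b) (hdx : x < d x) (hy : y ∈ Ioo a b) :
    ∃ m : ℤ, (d ^ m) x ≤ y ∧ y < (d ^ (m + 1)) x := by
  have hpos := hH.lt_apply_of_lt_apply hd hx hdx
  have hmaps : ∀ m : ℤ, (d ^ m) x ∈ Ioo a b := fun m => hH.mapsTo _ (H.zpow_mem hd m) hx
  have hmono : StrictMono fun m : ℤ => (d ^ m) x := strictMono_int_of_lt_succ fun m => by
    rw [add_comm m 1, zpow_one_add, Equiv.Perm.mul_apply]; exact hpos _ (hmaps m)
  have hfree : ∀ z ∈ Ioo a b, d z ≠ z := fun z hz hdz =>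
    hdx.ne' (hH.eqOn_of_isFixedPt d hd z hz hdz x hx)
  have hup : Tendsto (fun n => d^[n] x) atTop (𝓝 b) :=
    (hH.strictMono d hd).monotone.tendsto_iterate_of_le_map (hH.continuous d hd) hdx.le
      (fun n => ((hH.mapsTo d hd).iterate n hx).2.le) fun z hz => hfree z ⟨hx.1.trans_le hz.1, hz.2⟩
  have hdown : Tendsto (fun n => (⇑d⁻¹)^[n] x) atTop (𝓝 a) := by
    have hinv := H.inv_mem hd
    refine (hH.strictMono _ hinv).monotone.tendsto_iterate_of_map_le (hH.continuous _ hinv) ?_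
      (fun n => ((hH.mapsTo _ hinv).iterate n hx).1.le) fun z hz hz' => ?_
    · simpa using (hH.strictMono _ hinv).monotone hdx.le
    · exact hfree z ⟨hz.1, hz.2.trans_lt hx.2⟩ (Equiv.Perm.inv_eq_iff_eq.1 hz').symm
  obtain ⟨N, hN⟩ := (hup.eventually (lt_mem_nhds hy.2)).exists
  obtain ⟨N', hN'⟩ := (hdown.eventually (gt_mem_nhds hy.1)).exists
  rw [Equiv.Perm.iterate_eq_pow] at hN
  obtain ⟨m, hm, hmax⟩ := Int.exists_greatest_of_bdd (P := fun m : ℤ => (d ^ m) x ≤ y)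
    ⟨N, fun z hz => (hmono.lt_iff_lt.1 (hz.trans_lt (by simpa using hN))).le⟩
    ⟨-N', by
      rw [zpow_neg, zpow_natCast, ← inv_pow, ← Equiv.Perm.iterate_eq_pow]; exact hN'.le⟩
  exact ⟨m, hm, not_le.1 fun h => (hmax _ h).not_gt (lt_add_one m)⟩

theorem exists_zpow_le_lt (hH : IsFreeMonotoneActionOn H a b) (hd : d ∈ H)
    (hdpos : ∀ z ∈ Ioo a b, z < d z) (he : e ∈ H) :
    ∃ m : ℤ, (∀ z ∈ Ioo a b, (d ^ m) z ≤ e z) ∧ ∀ z ∈ Ioo a b, e z < (d ^ (m + 1)) z := by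
  rcases (Ioo a b).eq_empty_or_nonempty with hI | ⟨x, hx⟩
  · exact ⟨0, by simp [hI]⟩
  obtain ⟨m, hm₁, hm₂⟩ := hH.exists_zpow_apply_le_lt hd hx (hdpos _ hx) (hH.mapsTo e he hx)
  exact ⟨m, hH.apply_le_apply_of_le (H.zpow_mem hd m) he hx hm₁,
    hH.apply_lt_apply_of_lt he (H.zpow_mem hd (m + 1)) hx hm₂⟩

-- With `d^m ≤ u < d^(m+1)` and `d^n ≤ v < d^(n+1)`, the commutator ends up below `d²`.
theorem commutator_apply_lt (hH : IsFreeMonotoneActionOn H a b) (hu : u ∈ H) (hv : v ∈ H)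
    (hd : d ∈ H) (hdpos : ∀ z ∈ Ioo a b, z < d z) (hx : x ∈ Ioo a b) : ⁅u, v⁆ x < d (d x) := by
  obtain ⟨m, hum, hum'⟩ := hH.exists_zpow_le_lt hd hdpos hu
  obtain ⟨n, hvn, hvn'⟩ := hH.exists_zpow_le_lt hd hdpos hv
  have hzpow : ∀ (i j : ℤ) (z : ℝ), (d ^ i) ((d ^ j) z) = (d ^ (i + j)) z := fun i j z => by
    rw [← Equiv.Perm.mul_apply, ← zpow_add]
  set t := u⁻¹ (v⁻¹ x) with ht
  have htI : t ∈ Ioo a b := hH.mapsTo _ (H.inv_mem hu) (hH.mapsTo _ (H.inv_mem hv) hx)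
  have hvut : v (u t) = x := by simp [t]
  have hlower : (d ^ (m + n)) t ≤ x := calc
    (d ^ (m + n)) t = (d ^ n) ((d ^ m) t) := by rw [hzpow, add_comm]
    _ ≤ v ((d ^ m) t) := hvn _ (hH.mapsTo _ (H.zpow_mem hd m) htI)
    _ ≤ v (u t) := (hH.strictMono v hv).monotone (hum t htI)
    _ = x := hvut
  have hdd := (hH.strictMono d hd).monotone
  calc ⁅u, v⁆ x = u (v t) := rfl
    _ < (d ^ (m + 1)) (v t) := hum' _ (hH.mapsTo v hv htI)
    _ < (d ^ (m + 1)) ((d ^ (n + 1)) t) := hH.strictMono _ (H.zpow_mem hd _) (hvn' t htI)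
    _ = d (d ((d ^ (m + n)) t)) := by
        simp only [← Equiv.Perm.mul_apply, ← zpow_add, ← zpow_one_add]; ring_nf
    _ ≤ d (d x) := hdd (hdd hlower)

theorem exists_apply_apply_le (hH : IsFreeMonotoneActionOn H a b) (hc : c ∈ H) (he : e ∈ H)
    (hx : x ∈ Ioo a b) (hxe : x < e x) (hec : e x < c x) :
    ∃ d ∈ H, (∀ z ∈ Ioo a b, z < d z) ∧ d (d x) ≤ c x := by
  have hk : c * e⁻¹ ∈ H := H.mul_mem hc (H.inv_mem he)
  have hke : (c * e⁻¹) (e x) = c x := by simp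
  have hexI := hH.mapsTo e he hx
  rcases le_or_gt (e (e x)) ((c * e⁻¹) (e x)) with hle | hlt
  · exact ⟨e, he, hH.lt_apply_of_lt_apply he hx hxe, hke ▸ hle⟩
  · refine ⟨_, hk, hH.lt_apply_of_lt_apply hk hexI (hke ▸ hec), hke ▸ ?_⟩
    exact (hH.strictMono _ hk).monotone (hH.apply_lt_apply_of_lt hk he hexI hlt x hx).le

theorem exists_zpow_eqOn (hH : IsFreeMonotoneActionOn H a b) (hc : c ∈ H) (hx : x ∈ Ioo a b)
    (hcx : x < c x) (hmin : ∀ e ∈ H, x < e x → c x ≤ e x) (he : e ∈ H) :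
    ∃ m : ℤ, ∀ z ∈ Ioo a b, e z = (c ^ m) z := by
  obtain ⟨m, hm₁, hm₂⟩ := hH.exists_zpow_le_lt hc (hH.lt_apply_of_lt_apply hc hx hcx) he
  have hr : (c ^ m)⁻¹ * e ∈ H := H.mul_mem (H.inv_mem (H.zpow_mem hc m)) he
  have hmono := hH.strictMono _ (H.inv_mem (H.zpow_mem hc m))
  have hxr : x ≤ ((c ^ m)⁻¹ * e) x := by
    have := hmono.monotone (hm₁ x hx)
    rwa [← Equiv.Perm.mul_apply, inv_mul_cancel, Equiv.Perm.one_apply] at this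
  have hrc : ((c ^ m)⁻¹ * e) x < c x := by
    have hcm : (c ^ m)⁻¹ ((c ^ (m + 1)) x) = c x := by
      rw [← Equiv.Perm.mul_apply, ← zpow_neg, ← zpow_add, neg_add_cancel_left, zpow_one]
    exact hcm ▸ hmono (hm₂ x hx)
  have hrx : ((c ^ m)⁻¹ * e) x = x :=
    (hxr.lt_or_eq.resolve_left fun h => (hmin _ hr h).not_gt hrc).symm
  refine ⟨m, fun z hz => ?_⟩
  have := hH.eqOn_of_isFixedPt _ hr x hx hrx z hz
  rwa [Equiv.Perm.mul_apply, Equiv.Perm.inv_eq_iff_eq] at this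

theorem not_lt_commutator_apply (hH : IsFreeMonotoneActionOn H a b) (hu : u ∈ H) (hv : v ∈ H)
    (hx : x ∈ Ioo a b) : ¬ x < ⁅u, v⁆ x := by
  intro hcx
  have hc := H.commutatorElement_mem hu hv
  by_cases hmid : ∃ e ∈ H, x < e x ∧ e x < ⁅u, v⁆ x
  · obtain ⟨e, he, hxe, hec⟩ := hmid
    obtain ⟨d, hd, hdpos, hdd⟩ := hH.exists_apply_apply_le hc he hx hxe hec
    exact (hH.commutator_apply_lt hu hv hd hdpos hx).not_ge hdd
  · -- `⁅u, v⁆` is the least positive element, so `u` and `v` act as powers of it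
    push Not at hmid
    obtain ⟨m, hm⟩ := hH.exists_zpow_eqOn hc hx hcx hmid hu
    obtain ⟨n, hn⟩ := hH.exists_zpow_eqOn hc hx hcx hmid hv
    set y := u⁻¹ (v⁻¹ x)
    have hyI : y ∈ Ioo a b := hH.mapsTo _ (H.inv_mem hu) (hH.mapsTo _ (H.inv_mem hv) hx)
    refine hcx.ne' (calc
      ⁅u, v⁆ x = u (v y) := rfl
      _ = v (u y) := by
        rw [hm _ (hH.mapsTo v hv hyI), hn _ hyI, hn _ (hH.mapsTo u hu hyI), hm _ hyI,
          ← Equiv.Perm.mul_apply, (Commute.zpow_zpow_self _ m n).eq, Equiv.Perm.mul_apply]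
      _ = x := by simp [y])

theorem commutator_apply_eq (hH : IsFreeMonotoneActionOn H a b) (hu : u ∈ H) (hv : v ∈ H)
    (hx : x ∈ Ioo a b) : ⁅u, v⁆ x = x := by
  refine le_antisymm (not_lt.1 (hH.not_lt_commutator_apply hu hv hx)) (not_lt.1 fun hlt => ?_)
  have := hH.strictMono _ (H.inv_mem (H.commutatorElement_mem hu hv)) hlt
  rw [← Equiv.Perm.mul_apply, inv_mul_cancel, Equiv.Perm.one_apply, commutatorElement_inv] at this
  exact hH.not_lt_commutator_apply hv hu hx this

end IsFreeMonotoneActionOn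

-- the centralizer `C(G)` of the paper
def icoDiffCentralizer (G : Subgroup (Equiv.Perm ℝ)) : Subgroup (Equiv.Perm ℝ) :=
  icoDiffGroup 2 ⊓ Subgroup.centralizer G

section CommonFixedPoints

variable {G : Subgroup (Equiv.Perm ℝ)} {e : Equiv.Perm ℝ} {a b : ℝ}

theorem apply_eq_self_of_frequently_apply_ne (hG : ∀ g ∈ G, IsIcoDiff 2 g)
    (he : e ∈ icoDiffCentralizer G) {p : ℝ} (hp : ∀ g ∈ G, g p = p)
    (hmoved : ∃ᶠ x in 𝓝 p, ∃ g ∈ G, g x ≠ x) : e p = p := by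
  by_contra hep
  obtain ⟨U, hU, hUfix⟩ := he.1.exists_mem_nhds_subset_fixedPoints hep
  refine hmoved (mem_of_superset hU fun x hx ⟨g, hg, hgx⟩ => hgx ?_)
  exact hUfix g ((hG g hg).of_le one_le_two) (he.2 g hg).symm (hp g hg) hx

theorem Ioo_subset_fixedPoints_of_mem_icoDiffCentralizer (hG : ∀ g ∈ G, IsIcoDiff 2 g)
    (he : e ∈ icoDiffCentralizer G) (hmoved : ∀ x ∈ Ioo a b, ∃ g ∈ G, g x ≠ x) {p : ℝ}
    (hp : p ∈ Ioo a b) (hep : e p = p) : Ioo a b ⊆ fixedPoints e := by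
  refine isPreconnected_Ioo.subset_of_forall_mem_nhds (isClosed_fixedPoints he.1.continuous)
    ⟨p, hp, hep⟩ fun x hx => ?_
  obtain ⟨g, hg, hgx⟩ := hmoved x hx.1
  obtain ⟨U, hU, hUfix⟩ := (hG g hg).exists_mem_nhds_subset_fixedPoints hgx
  exact mem_of_superset hU (hUfix e (he.1.of_le one_le_two) (he.2 g hg) hx.2)

theorem exists_Ioo_moved_with_ends_fixed_by_centralizer (hG : ∀ g ∈ G, IsIcoDiff 2 g) {w : ℝ}
    (hw : ∃ g ∈ G, g w ≠ w) :
    ∃ a b, w ∈ Ioo a b ∧ (∀ x ∈ Ioo a b, ∃ g ∈ G, g x ≠ x) ∧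
      ∀ e ∈ icoDiffCentralizer G, e a = a ∧ e b = b := by
  set F := {x : ℝ | ∀ g ∈ G, g x = x}
  have hF : IsClosed F := by
    convert isClosed_biInter fun g (hg : g ∈ G) => isClosed_fixedPoints (hG g hg).continuous
    ext x
    simp [F, IsFixedPt]
  obtain ⟨g₀, hg₀, hw₀⟩ := hw
  have hwI := (hG g₀ hg₀).mem_Ico_of_apply_ne hw₀
  obtain ⟨a, b, haF, hbF, hwab, habF⟩ := hF.exists_Ioo_of_notMem
    (fun g hg => (hG g hg).apply_eq_self (by norm_num : (-1 : ℝ) ∉ Ico 0 1))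
    (fun g hg => (hG g hg).apply_eq_self (by norm_num : (1 : ℝ) ∉ Ico 0 1))
    (by linarith [hwI.1]) hwI.2.le fun hwF => hw₀ (hwF g₀ hg₀)
  have hmoved : ∀ x ∈ Ioo a b, ∃ g ∈ G, g x ≠ x := fun x hx => by simpa [F] using habF x hx
  have hab : a < b := hwab.1.trans hwab.2
  refine ⟨a, b, hwab, hmoved, fun e he => ⟨?_, ?_⟩⟩
  · exact apply_eq_self_of_frequently_apply_ne hG he haF
      ((eventually_of_mem (Ioo_mem_nhdsGT hab) hmoved).frequently.filter_mono nhdsWithin_le_nhds)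
  · exact apply_eq_self_of_frequently_apply_ne hG he hbF
      ((eventually_of_mem (Ioo_mem_nhdsLT hab) hmoved).frequently.filter_mono nhdsWithin_le_nhds)

theorem isFreeMonotoneActionOn_icoDiffCentralizer (hG : ∀ g ∈ G, IsIcoDiff 2 g)
    (hmoved : ∀ x ∈ Ioo a b, ∃ g ∈ G, g x ≠ x) :
    IsFreeMonotoneActionOn (icoDiffCentralizer G ⊓ MulAction.stabilizer (Equiv.Perm ℝ) a ⊓
      MulAction.stabilizer (Equiv.Perm ℝ) b) a b where
  strictMono e he := he.1.1.1.strictMono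
  continuous e he := he.1.1.1.continuous
  mapsTo e he x hx := by
    have hea : e a = a := he.1.2
    have heb : e b = b := he.2
    exact ⟨hea ▸ he.1.1.1.strictMono hx.1, heb ▸ he.1.1.1.strictMono hx.2⟩
  eqOn_of_isFixedPt e he p hp hep :=
    Ioo_subset_fixedPoints_of_mem_icoDiffCentralizer hG he.1.1 hmoved hp hep

end CommonFixedPoints

theorem IsIcoDiff.exists_apply_ne_notMem {r : ℕ∞} {c : Equiv.Perm ℝ} (hc : IsIcoDiff r c)
    (hc1 : c ≠ 1) {F : Set ℝ} (hF : ∀ a b, a < b → Ioo a b ⊆ Ico 0 1 → ¬ Ioo a b ⊆ F) :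
    ∃ w, c w ≠ w ∧ w ∉ F := by
  obtain ⟨w₀, hw₀⟩ : ∃ w₀, c w₀ ≠ w₀ := by
    by_contra! h
    exact hc1 (Equiv.ext h)
  have hopen : IsOpen {x | c x ≠ x} := (isClosed_fixedPoints hc.continuous).isOpen_compl
  obtain ⟨s, t, hst, hsub⟩ := mem_nhds_iff_exists_Ioo_subset.1 (hopen.mem_nhds hw₀)
  obtain ⟨w, hw, hwF⟩ := not_subset.1 <|
    hF s t (hst.1.trans hst.2) fun x hx => hc.mem_Ico_of_apply_ne (hsub hx)
  exact ⟨w, hsub hw, hwF⟩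

theorem fix_contains_interval_general (G : Subgroup (Equiv.Perm ℝ))
    (hG : ∀ g ∈ G, IsIcoDiff 2 g)
    (hCna : ∃ h₁ h₂ : Equiv.Perm ℝ,
      (IsIcoDiff 2 h₁ ∧ ∀ g ∈ G, Commute g h₁) ∧
      (IsIcoDiff 2 h₂ ∧ ∀ g ∈ G, Commute g h₂) ∧ ¬Commute h₁ h₂) :
    ∃ a b : ℝ, a < b ∧ Set.Ioo a b ⊆ Set.Ico 0 1 ∧
      ∀ x ∈ Set.Ioo a b, ∀ g ∈ G, g x = x := by
  obtain ⟨h₁, h₂, hh₁, hh₂, hnc⟩ := hCna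
  by_contra hF
  have hc : IsIcoDiff 2 ⁅h₁, h₂⁆ := (icoDiffGroup 2).commutatorElement_mem hh₁.1 hh₂.1
  obtain ⟨w, hcw, hw⟩ := hc.exists_apply_ne_notMem
    (mt commutatorElement_eq_one_iff_commute.1 hnc) (F := {x | ∀ g ∈ G, g x = x})
    fun a b hab hsub hsubF => hF ⟨a, b, hab, hsub, hsubF⟩
  obtain ⟨a, b, hwab, hmoved, hfix⟩ :=
    exists_Ioo_moved_with_ends_fixed_by_centralizer hG (by simpa using hw)
  have hmem : ∀ e ∈ icoDiffCentralizer G,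
      e ∈ icoDiffCentralizer G ⊓ MulAction.stabilizer _ a ⊓ MulAction.stabilizer _ b :=
    fun e he => ⟨⟨he, (hfix e he).1⟩, (hfix e he).2⟩
  exact hcw ((isFreeMonotoneActionOn_icoDiffCentralizer hG hmoved).commutator_apply_eq
    (hmem h₁ hh₁) (hmem h₂ hh₂) hwab)

/-- Proposition 2.2: a nonabelian subgroup of Diff₊²([0,1)) with nonabelian centralizer
has a nonempty open interval in its fixed-point set. -/
theorem fix_contains_interval (G : Subgroup (Equiv.Perm ℝ))
    (hG : ∀ g ∈ G, IsIcoDiff 2 g)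
    (hGna : ∃ g₁ ∈ G, ∃ g₂ ∈ G, ¬Commute g₁ g₂)
    (hCna : ∃ h₁ h₂ : Equiv.Perm ℝ,
      (IsIcoDiff 2 h₁ ∧ ∀ g ∈ G, Commute g h₁) ∧
      (IsIcoDiff 2 h₂ ∧ ∀ g ∈ G, Commute g h₂) ∧ ¬Commute h₁ h₂) :
    ∃ a b : ℝ, a < b ∧ Set.Ioo a b ⊆ Set.Ico 0 1 ∧
      ∀ x ∈ Set.Ioo a b, ∀ g ∈ G, g x = x :=
  fix_contains_interval_general G hG hCna
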